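/- arXiv:2502.05962 — 3 statements merged into one kernel-verified Lean document; each statement's English description precedes it below -/
import Mathlib

section
/- The function Φ(x,y) = (1/π)·arctan(x/(y+1)) + 1/2 satisfies the boundary condition ∂_y Φ(x,0) = -(1/(2π))·sin(2π(Φ(x,0) - 1/2)) for all x ∈ ℝ. -/
open Real

/-- The explicit layer solution. -/
noncomputable def Phi (x y : ℝ) : ℝ := (1 / π) * arctan (x / (y + 1)) + 1 / 2

lemma Real.sin_two_mul_arctan (x : ℝ) : sin (2 * arctan x) = 2 * x / (1 + x ^ 2) := by
  have hpos : 0 < 1 + x ^ 2 := by positivity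
  rw [sin_two_mul, sin_arctan, cos_arctan]
  field_simp
  rw [sq_sqrt hpos.le]

lemma hasDerivAt_Phi (x : ℝ) {y : ℝ} (hy : y + 1 ≠ 0) :
    HasDerivAt (Phi x) (-x / (π * ((y + 1) ^ 2 + x ^ 2))) y := by
  have hquot : HasDerivAt (fun t : ℝ => x / (t + 1)) (-x / (y + 1) ^ 2) y := by
    simpa using (hasDerivAt_const y x).fun_div ((hasDerivAt_id' y).add_const 1) hy
  refine (((hquot.arctan).const_mul (1 / π)).add_const (1 / 2 : ℝ)).congr_deriv ?_
  field_simp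

lemma Phi_zero_sub_half (x : ℝ) : Phi x 0 - 1 / 2 = arctan x / π := by
  simp [Phi, div_eq_inv_mul]

/-- `Φ` satisfies the boundary condition `∂_y Φ(x,0) = W'(Φ(x,0))` with
`W'(u) = -(1/(2π))·sin(2π(u - 1/2))`. -/
theorem stmt_1 :
    ∀ x : ℝ,
      deriv (fun y => Phi x y) 0
        = -(1 / (2 * π)) * Real.sin (2 * π * (Phi x 0 - 1 / 2)) := by
  intro x
  have hderiv : deriv (Phi x) 0 = -x / (π * (1 + x ^ 2)) := by
    simpa using (hasDerivAt_Phi x (y := 0) (by norm_num)).deriv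
  have hangle : 2 * π * (Phi x 0 - 1 / 2) = 2 * arctan x := by
    rw [Phi_zero_sub_half]
    field_simp
  rw [hderiv, hangle, sin_two_mul_arctan]
  field_simp
end

section
/- Let φ : ℝ × [0,∞) → ℝ be harmonic in the upper half-plane, bounded, with boundary values satisfying 0 ≤ φ(x,0) ≤ 1 and |φ(x,0) - H(x)| ≤ C·ε/|x| for |x| ≥ √ε (H the Heaviside function). Then, writing φ via the Poisson kernel, for every y > 0 and ε > 0: φ(x/ε, y/ε) ≤ (1/π)·(π/2 + arctan((x + √ε)/y)) + C'·√ε for some constant C' depending only on C. -/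
open Real MeasureTheory

/-- The Heaviside function. -/
noncomputable def Heav (x : ℝ) : ℝ := if 0 < x then 1 else 0

/-!
The Poisson kernel `P_y(x - ·)` is a probability density whose mass on `(a, ∞)` is
`(1/π)(π/2 + arctan((x - a)/y))`, an antiderivative being `arctan((ξ - x)/y)/π`. Boundary data
with values in `[0, 1]` and bounded by `c` on `(-∞, a]` therefore has Poisson integral at most
that mass plus `c`. For the layer data, `a = -1/√ε` works with `c = (C + 1)√ε`: when `ε ≤ 1` the
decay estimate applies there and gives `Cε/|ξ| ≤ Cε√ε`, and when `ε > 1` already `1 ≤ √ε`.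
Rescaling by `ε` turns `(x/ε + 1/√ε)/(y/ε)` into `(x + √ε)/y`.
-/

open Set Filter Topology

noncomputable def halfPlanePoissonKernel (x y ξ : ℝ) : ℝ := (1 / π) * (y / ((x - ξ) ^ 2 + y ^ 2))

section HalfPlanePoissonKernel

variable {x y : ℝ}

lemma hasDerivAt_arctan_sub_div_div_pi (hy : y ≠ 0) (ξ : ℝ) :
    HasDerivAt (fun t => arctan ((t - x) / y) / π) (halfPlanePoissonKernel x y ξ) ξ := by
  refine ((((hasDerivAt_id' ξ).sub_const x).div_const y).arctan.div_const π).congr_deriv ?_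
  have : (x - ξ) ^ 2 + y ^ 2 ≠ 0 := by positivity
  simp only [halfPlanePoissonKernel]
  field_simp
  ring

lemma tendsto_arctan_sub_div_div_pi_atTop (hy : 0 < y) :
    Tendsto (fun t => arctan ((t - x) / y) / π) atTop (𝓝 (π / 2 / π)) :=
  ((tendsto_nhds_of_tendsto_nhdsWithin tendsto_arctan_atTop).comp
    ((tendsto_atTop_add_const_right _ (-x) tendsto_id).atTop_div_const hy)).div_const π

lemma tendsto_arctan_sub_div_div_pi_atBot (hy : 0 < y) :
    Tendsto (fun t => arctan ((t - x) / y) / π) atBot (𝓝 (-(π / 2) / π)) :=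
  ((tendsto_nhds_of_tendsto_nhdsWithin tendsto_arctan_atBot).comp
    ((tendsto_atBot_add_const_right _ (-x) tendsto_id).atBot_div_const hy)).div_const π

lemma halfPlanePoissonKernel_pos (hy : 0 < y) (ξ : ℝ) : 0 < halfPlanePoissonKernel x y ξ := by
  have : 0 < (x - ξ) ^ 2 + y ^ 2 := by positivity
  unfold halfPlanePoissonKernel
  positivity

lemma integrable_halfPlanePoissonKernel (hy : 0 < y) : Integrable (halfPlanePoissonKernel x y) := by
  have h : Integrable fun ξ : ℝ => (1 + ((ξ - x) / y) ^ 2)⁻¹ :=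
    (integrable_inv_one_add_sq.comp_div hy.ne').comp_sub_right x
  refine (h.const_mul (π⁻¹ * y⁻¹)).congr (Eventually.of_forall fun ξ => ?_)
  have : (x - ξ) ^ 2 + y ^ 2 ≠ 0 := by positivity
  simp only [halfPlanePoissonKernel]
  field_simp
  ring

lemma integral_halfPlanePoissonKernel (hy : 0 < y) : ∫ ξ, halfPlanePoissonKernel x y ξ = 1 := by
  rw [integral_of_hasDerivAt_of_tendsto (hasDerivAt_arctan_sub_div_div_pi hy.ne')
    (integrable_halfPlanePoissonKernel hy) (tendsto_arctan_sub_div_div_pi_atBot hy)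
    (tendsto_arctan_sub_div_div_pi_atTop hy)]
  field_simp
  ring

lemma integral_Ioi_halfPlanePoissonKernel (hy : 0 < y) (a : ℝ) :
    ∫ ξ in Ioi a, halfPlanePoissonKernel x y ξ = (1 / π) * (π / 2 + arctan ((x - a) / y)) := by
  rw [integral_Ioi_of_hasDerivAt_of_tendsto' (fun ξ _ => hasDerivAt_arctan_sub_div_div_pi hy.ne' ξ)
    (integrable_halfPlanePoissonKernel hy).integrableOn (tendsto_arctan_sub_div_div_pi_atTop hy),
    show (a - x) / y = -((x - a) / y) by ring, arctan_neg]
  ring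

lemma integral_halfPlanePoissonKernel_mul_le {a c : ℝ} (hy : 0 < y) {f : ℝ → ℝ}
    (hf0 : ∀ ξ, 0 ≤ f ξ) (hf1 : ∀ ξ, f ξ ≤ 1) (hfc : ∀ ξ ≤ a, f ξ ≤ c) :
    ∫ ξ, halfPlanePoissonKernel x y ξ * f ξ
      ≤ (1 / π) * (π / 2 + arctan ((x - a) / y)) + c := by
  set P := halfPlanePoissonKernel x y
  have hP : Integrable P := integrable_halfPlanePoissonKernel hy
  have hc : 0 ≤ c := (hf0 a).trans (hfc a le_rfl)
  have hPf_le : ∀ ξ, P ξ * f ξ ≤ (Ioi a).indicator P ξ + c * P ξ := by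
    intro ξ
    have hPξ := halfPlanePoissonKernel_pos (x := x) hy ξ
    by_cases hξ : ξ ∈ Ioi a
    · rw [indicator_of_mem hξ]
      nlinarith [hf1 ξ]
    · rw [indicator_of_notMem hξ, zero_add, mul_comm c]
      exact mul_le_mul_of_nonneg_left (hfc ξ (not_lt.1 hξ)) hPξ.le
  calc ∫ ξ, P ξ * f ξ ≤ ∫ ξ, (Ioi a).indicator P ξ + c * P ξ :=
        integral_mono_of_nonneg
          (Eventually.of_forall fun ξ => mul_nonneg (halfPlanePoissonKernel_pos hy ξ).le (hf0 ξ))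
          ((hP.indicator measurableSet_Ioi).add (hP.const_mul c)) (Eventually.of_forall hPf_le)
    _ = (1 / π) * (π / 2 + arctan ((x - a) / y)) + c := by
      rw [integral_add (hP.indicator measurableSet_Ioi) (hP.const_mul c),
        integral_indicator measurableSet_Ioi, integral_const_mul,
        integral_Ioi_halfPlanePoissonKernel hy, integral_halfPlanePoissonKernel hy, mul_one]

end HalfPlanePoissonKernel

lemma le_of_le_neg_inv_sqrt_of_layer_decay {C ε : ℝ} (hC : 0 ≤ C) (hε : 0 < ε) {f : ℝ → ℝ}
    (hf1 : ∀ ξ, f ξ ≤ 1) (hdec : ∀ ξ, √ε ≤ |ξ| → |f ξ - Heav ξ| ≤ C * ε / |ξ|)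
    {ξ : ℝ} (hξ : ξ ≤ -(√ε)⁻¹) : f ξ ≤ (C + 1) * √ε := by
  set r := √ε
  have hr : 0 < r := sqrt_pos.2 hε
  rcases le_or_gt ε 1 with hε1 | hε1
  · have hξneg : ξ < 0 := hξ.trans_lt (neg_neg_of_pos (inv_pos.2 hr))
    have habs : r⁻¹ ≤ |ξ| := by rw [abs_of_neg hξneg]; linarith
    have hr1 : r ≤ 1 := sqrt_le_one.2 hε1
    have hr_le : r ≤ r⁻¹ := hr1.trans ((one_le_inv₀ hr).2 hr1)
    have hdecξ := hdec ξ (hr_le.trans habs)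
    rw [Heav, if_neg (not_lt.2 hξneg.le), sub_zero] at hdecξ
    calc f ξ ≤ C * ε / |ξ| := (le_abs_self _).trans hdecξ
      _ ≤ C * ε / r⁻¹ := div_le_div_of_nonneg_left (by positivity) (by positivity) habs
      _ = C * r * ε := by field_simp
      _ ≤ (C + 1) * r := by nlinarith [mul_nonneg hC hr.le]
  · have hr1 : 1 < r := by rw [← sqrt_one]; exact sqrt_lt_sqrt zero_le_one hε1
    nlinarith [hf1 ξ]

/-- Poisson-kernel estimate for a bounded harmonic function whose boundary data
decays like a layer: `φ(x/ε, y/ε) ≤ (1/π)(π/2 + arctan((x+√ε)/y)) + C'√ε`. -/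
theorem stmt_9 :
    ∀ C : ℝ, 0 < C → ∃ C' : ℝ, 0 < C' ∧
      ∀ (φ : ℝ → ℝ → ℝ) (ε : ℝ), 0 < ε →
        (∀ x y : ℝ, 0 < y →
          φ x y = ∫ ξ : ℝ, (1 / π) * (y / ((x - ξ) ^ 2 + y ^ 2)) * φ ξ 0) →
        (∀ x : ℝ, 0 ≤ φ x 0 ∧ φ x 0 ≤ 1) →
        (∀ x : ℝ, Real.sqrt ε ≤ |x| → |φ x 0 - Heav x| ≤ C * ε / |x|) →
        ∀ x y : ℝ, 0 < y →
          φ (x / ε) (y / ε)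
            ≤ (1 / π) * (π / 2 + arctan ((x + Real.sqrt ε) / y)) + C' * Real.sqrt ε := by
  intro C hC
  refine ⟨C + 1, by linarith, fun φ ε hε hrep hbd hdec x y hy => ?_⟩
  have hY : 0 < y / ε := div_pos hy hε
  have hscale : (x / ε - -(√ε)⁻¹) / (y / ε) = (x + √ε) / y := by
    have hrr : √ε * √ε = ε := mul_self_sqrt hε.le
    field_simp
    linear_combination -hrr
  rw [hrep _ _ hY, ← hscale]
  exact integral_halfPlanePoissonKernel_mul_le hY (fun ξ => (hbd ξ).1) (fun ξ => (hbd ξ).2)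
    fun ξ hξ => le_of_le_neg_inv_sqrt_of_layer_decay hC.le hε (fun ξ => (hbd ξ).2) hdec hξ
end

section
/- Suppose ψ is harmonic and bounded in the open upper half-plane, continuous up to the boundary, and there is C > 0 with -C·∂_x Φ(x,0) ≤ ψ(x,0) ≤ C·∂_x Φ(x,0) for all x ∈ ℝ, where Φ(x,y) = (1/π)·arctan(x/(y+1)) + 1/2 and ψ(x,y) → 0 as |(x,y)| → ∞. Then |ψ(x,y)| ≤ C·∂_x Φ(x,y) = (C/π)·(y+1)/(x²+(y+1)²) for all (x,y) with y ≥ 0; in particular |ψ(x,y)| ≤ C'/y for y ≥ 1. -/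
open Real

/-!
`P(x, y) = (y + 1) / (x² + (y + 1)²) = π ∂ₓΦ(x, y)` is nonnegative and harmonic on the closed
upper half-plane, so `±ψ - (C/π) P` is harmonic there, nonpositive on the boundary line and at
most `δ` outside a large ball. Adding `ε (x² + y²)` makes it strictly subharmonic on the part of
the half-plane inside that ball, and a strictly subharmonic function has no interior maximum,
since both pure second derivatives are `≤ 0` there. Letting `ε, δ → 0` gives `|ψ| ≤ (C/π) P`,
and `P ≤ 1/y` gives the decay.
-/

open Filter Set Topology

theorem IsLocalMax.deriv_deriv_nonpos {f : ℝ → ℝ} {x₀ : ℝ} (h : IsLocalMax f x₀)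
    (hc : ContinuousAt f x₀) : deriv (deriv f) x₀ ≤ 0 := by
  by_contra! hpos
  -- a strict second-order minimum at a maximum forces `f` to be locally constant
  have hconst : f =ᶠ[𝓝 x₀] fun _ => f x₀ :=
    (h.and (isLocalMin_of_deriv_deriv_pos hpos h.deriv_eq_zero hc)).mono
      fun x hx => le_antisymm hx.1 hx.2
  have hderiv : deriv f =ᶠ[𝓝 x₀] fun _ => 0 :=
    hconst.eventually_nhds.mono fun x hx => by rw [EventuallyEq.deriv_eq hx, deriv_const]
  exact hpos.ne' (by rw [hderiv.deriv_eq, deriv_const])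

section
variable {𝕜 F : Type*} [NontriviallyNormedField 𝕜] [NormedAddCommGroup F] [NormedSpace 𝕜 F]
  {f g : 𝕜 → F} {x : 𝕜}

theorem deriv_deriv_add (hf : ContDiffAt 𝕜 2 f x) (hg : ContDiffAt 𝕜 2 g x) :
    deriv (deriv (f + g)) x = deriv (deriv f) x + deriv (deriv g) x := by
  have hfg : deriv (f + g) =ᶠ[𝓝 x] deriv f + deriv g := by
    filter_upwards [hf.eventually (by simp), hg.eventually (by simp)] with t hft hgt
    exact deriv_add (hft.differentiableAt two_ne_zero) (hgt.differentiableAt two_ne_zero)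
  rw [hfg.deriv_eq]
  exact deriv_add ((hf.derivWithin (m := 1) (by norm_num)).differentiableAt one_ne_zero)
    ((hg.derivWithin (m := 1) (by norm_num)).differentiableAt one_ne_zero)

theorem deriv_deriv_const_smul (c : 𝕜) : deriv (deriv (c • f)) x = c • deriv (deriv f) x := by
  rw [show deriv (c • f) = c • deriv f from funext fun _ => deriv_const_smul_field c f,
    deriv_const_smul_field]

end

noncomputable def coordLaplacian (f : ℝ × ℝ → ℝ) (p : ℝ × ℝ) : ℝ :=
  deriv (deriv fun x => f (x, p.2)) p.1 + deriv (deriv fun y => f (p.1, y)) p.2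

section
variable {f g : ℝ × ℝ → ℝ} {p : ℝ × ℝ}

theorem IsLocalMax.coordLaplacian_nonpos (h : IsLocalMax f p) (hc : ContinuousAt f p) :
    coordLaplacian f p ≤ 0 := by
  have hline : ∀ {γ : ℝ → ℝ × ℝ} {t : ℝ}, Continuous γ → γ t = p →
      deriv (deriv (f ∘ γ)) t ≤ 0 := fun hγ hγt => by
    subst hγt
    exact (h.comp_continuous hγ.continuousAt).deriv_deriv_nonpos (hc.comp hγ.continuousAt)
  exact add_nonpos (hline (continuous_id.prodMk continuous_const) rfl)
    (hline (continuous_const.prodMk continuous_id) rfl)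

theorem IsCompact.le_of_coordLaplacian_pos {K U : Set (ℝ × ℝ)} {m : ℝ} (hK : IsCompact K)
    (hU : IsOpen U) (hUK : U ⊆ K) (hf : ContinuousOn f K)
    (hlap : ∀ q ∈ U, 0 < coordLaplacian f q) (hm : ∀ q ∈ K \ U, f q ≤ m) (hp : p ∈ K) :
    f p ≤ m := by
  obtain ⟨q, hqK, hqmax⟩ := hK.exists_isMaxOn ⟨p, hp⟩ hf
  have hqU : q ∉ U := fun hqU => by
    have hKq : K ∈ 𝓝 q := mem_of_superset (hU.mem_nhds hqU) hUK
    exact (hlap q hqU).not_ge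
      ((hqmax.isLocalMax hKq).coordLaplacian_nonpos (hf.continuousAt hKq))
  exact (hqmax hp).trans (hm q ⟨hqK, hqU⟩)

theorem coordLaplacian_add (hf : ContDiffAt ℝ 2 f p) (hg : ContDiffAt ℝ 2 g p) :
    coordLaplacian (f + g) p = coordLaplacian f p + coordLaplacian g p := by
  have hx : ContDiffAt ℝ 2 (fun x : ℝ => (x, p.2)) p.1 := contDiffAt_id.prodMk contDiffAt_const
  have hy : ContDiffAt ℝ 2 (fun y : ℝ => (p.1, y)) p.2 := contDiffAt_const.prodMk contDiffAt_id
  have hfx : ContDiffAt ℝ 2 (fun x => f (x, p.2)) p.1 := hf.comp p.1 hx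
  have hgx : ContDiffAt ℝ 2 (fun x => g (x, p.2)) p.1 := hg.comp p.1 hx
  have hfy : ContDiffAt ℝ 2 (fun y => f (p.1, y)) p.2 := hf.comp p.2 hy
  have hgy : ContDiffAt ℝ 2 (fun y => g (p.1, y)) p.2 := hg.comp p.2 hy
  rw [coordLaplacian, coordLaplacian, coordLaplacian,
    show (fun x => (f + g) (x, p.2)) = (fun x => f (x, p.2)) + fun x => g (x, p.2) from rfl,
    show (fun y => (f + g) (p.1, y)) = (fun y => f (p.1, y)) + fun y => g (p.1, y) from rfl,
    deriv_deriv_add hfx hgx, deriv_deriv_add hfy hgy]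
  ring

theorem coordLaplacian_const_smul (c : ℝ) :
    coordLaplacian (c • f) p = c * coordLaplacian f p := by
  rw [coordLaplacian, coordLaplacian,
    show (fun x => (c • f) (x, p.2)) = c • fun x => f (x, p.2) from rfl,
    show (fun y => (c • f) (p.1, y)) = c • fun y => f (p.1, y) from rfl,
    deriv_deriv_const_smul, deriv_deriv_const_smul, smul_eq_mul, smul_eq_mul, mul_add]

theorem coordLaplacian_neg : coordLaplacian (-f) p = -coordLaplacian f p := by
  rw [← neg_one_smul ℝ f, coordLaplacian_const_smul, neg_one_mul]

theorem coordLaplacian_sub (hf : ContDiffAt ℝ 2 f p) (hg : ContDiffAt ℝ 2 g p) :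
    coordLaplacian (f - g) p = coordLaplacian f p - coordLaplacian g p := by
  have hg' : ContDiffAt ℝ 2 (-g) p := hg.neg
  rw [sub_eq_add_neg, coordLaplacian_add hf hg', coordLaplacian_neg, sub_eq_add_neg]

theorem coordLaplacian_normSq : coordLaplacian (fun q => q.1 ^ 2 + q.2 ^ 2) p = 4 := by
  have h : deriv (fun y : ℝ => y ^ 2) = fun y => 2 * y := by ext y; simp
  simp [coordLaplacian, h]
  norm_num

end

theorem nonpos_of_coordLaplacian_nonneg_of_halfPlane {f : ℝ × ℝ → ℝ}
    (hf : ContDiffOn ℝ 2 f {q | 0 < q.2}) (hfc : ContinuousOn f {q | 0 ≤ q.2})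
    (hlap : ∀ q : ℝ × ℝ, 0 < q.2 → 0 ≤ coordLaplacian f q) (hbdry : ∀ x, f (x, 0) ≤ 0)
    (hinf : ∀ δ > 0, ∃ R, ∀ q : ℝ × ℝ, 0 ≤ q.2 → R ≤ ‖q‖ → f q ≤ δ)
    {p : ℝ × ℝ} (hp : 0 ≤ p.2) : f p ≤ 0 := by
  refine le_of_forall_pos_le_add fun δ hδ => ?_
  obtain ⟨R₀, hR₀⟩ := hinf (δ / 2) (half_pos hδ)
  set R := max R₀ (max ‖p‖ 1)
  have hR : 0 < R := lt_max_of_lt_right (lt_max_of_lt_right one_pos)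
  -- `ε (x² + y²)` makes the Laplacian strictly positive and costs at most `δ / 2` on the
  -- half-square
  set ε := δ / (4 * R ^ 2)
  have hε : 0 < ε := by positivity
  set w : ℝ × ℝ → ℝ := f + ε • fun q => q.1 ^ 2 + q.2 ^ 2
  have hH : IsOpen {q : ℝ × ℝ | 0 < q.2} := isOpen_lt continuous_const continuous_snd
  have hK : IsCompact ({q : ℝ × ℝ | 0 ≤ q.2} ∩ Metric.closedBall 0 R) :=
    (isCompact_closedBall 0 R).inter_left (isClosed_le continuous_const continuous_snd)
  have hperturb : ∀ q ∈ {q : ℝ × ℝ | 0 ≤ q.2} ∩ Metric.closedBall 0 R,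
      ε * (q.1 ^ 2 + q.2 ^ 2) ≤ δ / 2 := fun q ⟨_, hqR⟩ => by
    rw [mem_closedBall_zero_iff] at hqR
    have h1 : q.1 ^ 2 ≤ R ^ 2 := by
      simpa using pow_le_pow_left₀ (norm_nonneg q.1) ((norm_fst_le q).trans hqR) 2
    have h2 : q.2 ^ 2 ≤ R ^ 2 := by
      simpa using pow_le_pow_left₀ (norm_nonneg q.2) ((norm_snd_le q).trans hqR) 2
    calc ε * (q.1 ^ 2 + q.2 ^ 2) ≤ ε * (2 * R ^ 2) := by gcongr; linarith
      _ = δ / 2 := by simp only [ε]; field_simp; ring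
  have hw : w p ≤ δ := by
    refine hK.le_of_coordLaplacian_pos (hH.inter Metric.isOpen_ball)
      (inter_subset_inter (fun q (hq : 0 < q.2) => hq.le) Metric.ball_subset_closedBall)
      ((hfc.mono inter_subset_left).add (Continuous.continuousOn (by fun_prop)))
      ?_ ?_ ⟨hp, mem_closedBall_zero_iff.2 (le_max_of_le_right (le_max_left _ _))⟩
    · rintro q ⟨hq, -⟩
      rw [coordLaplacian_add (hf.contDiffAt (hH.mem_nhds hq)) (ContDiff.contDiffAt (by fun_prop)),
        coordLaplacian_const_smul, coordLaplacian_normSq]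
      linarith [hlap q hq]
    · rintro q ⟨hqK, hqU⟩
      have hfq : f q ≤ δ / 2 := by
        rcases (show 0 ≤ q.2 from hqK.1).eq_or_lt with hq0 | hq0
        · rw [show q = (q.1, 0) from Prod.ext rfl hq0.symm]
          linarith [hbdry q.1]
        · have hqR : ¬ ‖q‖ < R := fun h => hqU ⟨hq0, mem_ball_zero_iff.2 h⟩
          exact hR₀ q hqK.1 ((le_max_left _ _).trans (not_lt.1 hqR))
      simp only [w, Pi.add_apply, Pi.smul_apply, smul_eq_mul]
      linarith [hperturb q hqK]
  have : 0 ≤ ε * (p.1 ^ 2 + p.2 ^ 2) := by positivity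
  simp only [w, Pi.add_apply, Pi.smul_apply, smul_eq_mul] at hw
  linarith

theorem abs_le_of_coordLaplacian_eq_zero_of_halfPlane {f g : ℝ × ℝ → ℝ}
    (hf : ContDiffOn ℝ 2 f {q | 0 < q.2}) (hg : ContDiffOn ℝ 2 g {q | 0 < q.2})
    (hfc : ContinuousOn f {q | 0 ≤ q.2}) (hgc : ContinuousOn g {q | 0 ≤ q.2})
    (hflap : ∀ q : ℝ × ℝ, 0 < q.2 → coordLaplacian f q = 0)
    (hglap : ∀ q : ℝ × ℝ, 0 < q.2 → coordLaplacian g q = 0)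
    (hg0 : ∀ q : ℝ × ℝ, 0 ≤ q.2 → 0 ≤ g q) (hbdry : ∀ x, |f (x, 0)| ≤ g (x, 0))
    (hinf : ∀ δ > 0, ∃ R, ∀ q : ℝ × ℝ, 0 ≤ q.2 → R ≤ ‖q‖ → |f q| ≤ δ)
    {p : ℝ × ℝ} (hp : 0 ≤ p.2) : |f p| ≤ g p := by
  have hopen : IsOpen {q : ℝ × ℝ | 0 < q.2} := isOpen_lt continuous_const continuous_snd
  have one_side : ∀ h : ℝ × ℝ → ℝ, ContDiffOn ℝ 2 h {q | 0 < q.2} →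
      ContinuousOn h {q | 0 ≤ q.2} → (∀ q : ℝ × ℝ, 0 < q.2 → coordLaplacian h q = 0) →
      (∀ q, h q ≤ |f q|) → h p ≤ g p := fun h hh hhc hhlap hhf => by
    have := nonpos_of_coordLaplacian_nonneg_of_halfPlane (f := h - g) (hh.sub hg) (hhc.sub hgc)
      (fun q hq => by
        rw [coordLaplacian_sub (hh.contDiffAt (hopen.mem_nhds hq))
          (hg.contDiffAt (hopen.mem_nhds hq)), hhlap q hq, hglap q hq, sub_zero])
      (fun x => sub_nonpos.2 ((hhf _).trans (hbdry x)))
      (fun δ hδ => (hinf δ hδ).imp fun R hR q hq hRq => by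
        rw [Pi.sub_apply]; linarith [hhf q, hR q hq hRq, hg0 q hq]) hp
    exact sub_nonpos.1 this
  refine abs_le.2 ⟨neg_le.1 (one_side (-f) hf.neg hfc.neg ?_ fun q => neg_le_abs _),
    one_side f hf hfc hflap fun q => le_abs_self _⟩
  intro q hq
  rw [coordLaplacian_neg, hflap q hq, neg_zero]

section
variable {a b : ℝ}

theorem hasDerivAt_poisson_fst (hD : a ^ 2 + b ^ 2 ≠ 0) :
    HasDerivAt (fun t => b / (t ^ 2 + b ^ 2)) (-2 * b * a / (a ^ 2 + b ^ 2) ^ 2) a := by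
  refine ((hasDerivAt_const a b).fun_div ((hasDerivAt_pow 2 a).add_const (b ^ 2)) hD).congr_deriv ?_
  field_simp
  ring

theorem hasDerivAt_poisson_fst_fst (hD : a ^ 2 + b ^ 2 ≠ 0) :
    HasDerivAt (fun t => -2 * b * t / (t ^ 2 + b ^ 2) ^ 2)
      (2 * b * (3 * a ^ 2 - b ^ 2) / (a ^ 2 + b ^ 2) ^ 3) a := by
  refine (((hasDerivAt_id' a).const_mul (-2 * b)).fun_div
    (((hasDerivAt_pow 2 a).add_const (b ^ 2)).fun_pow 2) (pow_ne_zero 2 hD)).congr_deriv ?_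
  field_simp
  ring

theorem hasDerivAt_poisson_snd (hD : a ^ 2 + b ^ 2 ≠ 0) :
    HasDerivAt (fun t => t / (a ^ 2 + t ^ 2)) ((a ^ 2 - b ^ 2) / (a ^ 2 + b ^ 2) ^ 2) b := by
  refine ((hasDerivAt_id' b).fun_div ((hasDerivAt_pow 2 b).const_add (a ^ 2)) hD).congr_deriv ?_
  field_simp
  ring

theorem hasDerivAt_poisson_snd_snd (hD : a ^ 2 + b ^ 2 ≠ 0) :
    HasDerivAt (fun t => (a ^ 2 - t ^ 2) / (a ^ 2 + t ^ 2) ^ 2)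
      (2 * b * (b ^ 2 - 3 * a ^ 2) / (a ^ 2 + b ^ 2) ^ 3) b := by
  refine (((hasDerivAt_pow 2 b).const_sub (a ^ 2)).fun_div
    (((hasDerivAt_pow 2 b).const_add (a ^ 2)).fun_pow 2) (pow_ne_zero 2 hD)).congr_deriv ?_
  field_simp
  ring

end

/-- `π ∂ₓΦ`: the Poisson kernel of the upper half-plane, translated down by one. -/
noncomputable def shiftedPoisson (p : ℝ × ℝ) : ℝ := (p.2 + 1) / (p.1 ^ 2 + (p.2 + 1) ^ 2)

theorem shiftedPoisson_nonneg {p : ℝ × ℝ} (hp : -1 ≤ p.2) : 0 ≤ shiftedPoisson p :=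
  div_nonneg (by linarith) (by positivity)

theorem contDiffOn_shiftedPoisson : ContDiffOn ℝ 2 shiftedPoisson {p | -1 < p.2} :=
  (contDiff_snd.add contDiff_const).contDiffOn.div (by fun_prop) fun p (hp : -1 < p.2) => by
    have : 0 < p.2 + 1 := by linarith
    positivity

theorem coordLaplacian_shiftedPoisson {p : ℝ × ℝ} (hp : -1 < p.2) :
    coordLaplacian shiftedPoisson p = 0 := by
  obtain ⟨x, y⟩ := p
  have hD : ∀ {a b : ℝ}, 0 < b → a ^ 2 + b ^ 2 ≠ 0 := fun hb =>
    (add_pos_of_nonneg_of_pos (sq_nonneg _) (pow_pos hb 2)).ne'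
  have hb : 0 < y + 1 := by linarith [show -1 < y from hp]
  have hxx : deriv (deriv fun a => shiftedPoisson (a, y)) x =
      2 * (y + 1) * (3 * x ^ 2 - (y + 1) ^ 2) / (x ^ 2 + (y + 1) ^ 2) ^ 3 := by
    rw [show deriv (fun a => shiftedPoisson (a, y)) = _ from
      funext fun a => (hasDerivAt_poisson_fst (hD hb)).deriv]
    exact (hasDerivAt_poisson_fst_fst (hD hb)).deriv
  have hyy : deriv (deriv fun t => shiftedPoisson (x, t)) y =
      2 * (y + 1) * ((y + 1) ^ 2 - 3 * x ^ 2) / (x ^ 2 + (y + 1) ^ 2) ^ 3 := by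
    have hderiv : deriv (fun t => shiftedPoisson (x, t)) =ᶠ[𝓝 y]
        fun t => (x ^ 2 - (t + 1) ^ 2) / (x ^ 2 + (t + 1) ^ 2) ^ 2 := by
      filter_upwards [eventually_gt_nhds (show -1 < y from hp)] with t ht
      exact ((hasDerivAt_poisson_snd (hD (by linarith))).comp_add_const t 1).deriv
    rw [hderiv.deriv_eq]
    exact ((hasDerivAt_poisson_snd_snd (hD hb)).comp_add_const y 1).deriv
  rw [coordLaplacian, hxx, hyy]
  ring

theorem shiftedPoisson_le_inv {p : ℝ × ℝ} (hp : 0 < p.2) : shiftedPoisson p ≤ 1 / p.2 := by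
  rw [shiftedPoisson, div_le_div_iff₀ (by positivity) hp]
  nlinarith [sq_nonneg p.1]

theorem deriv_Phi_zero (x : ℝ) : deriv (fun x' => Phi x' 0) x = shiftedPoisson (x, 0) / π := by
  have hPhi : (fun x' => Phi x' 0) = fun x' => 1 / π * arctan x' + 1 / 2 := by
    funext x'
    simp [Phi]
  rw [hPhi, (((hasDerivAt_arctan x).const_mul (1 / π)).add_const (1 / 2)).deriv, shiftedPoisson]
  field_simp
  ring

theorem Prod.norm_le_sqrt_sq_add_sq (p : ℝ × ℝ) : ‖p‖ ≤ √(p.1 ^ 2 + p.2 ^ 2) :=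
  max_le (Real.abs_le_sqrt (le_add_of_nonneg_right (sq_nonneg _)))
    (Real.abs_le_sqrt (le_add_of_nonneg_left (sq_nonneg _)))

theorem stmt_15_general (ψ : ℝ → ℝ → ℝ) (C : ℝ) (hC : 0 < C)
    (hreg : ContDiffOn ℝ 2 (fun p : ℝ × ℝ => ψ p.1 p.2) {p : ℝ × ℝ | 0 < p.2})
    (hharm : ∀ x y : ℝ, 0 < y →
      deriv (fun x' => deriv (fun x'' => ψ x'' y) x') x
        + deriv (fun y' => deriv (fun y'' => ψ x y'') y') y = 0)
    (hcont : Continuous (fun p : ℝ × ℝ => ψ p.1 p.2))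
    (hbound : ∀ x : ℝ,
      -C * deriv (fun x' => Phi x' 0) x ≤ ψ x 0 ∧
      ψ x 0 ≤ C * deriv (fun x' => Phi x' 0) x)
    (hinf : ∀ δ : ℝ, 0 < δ → ∃ Rr : ℝ, ∀ x y : ℝ, 0 ≤ y →
      Rr ≤ Real.sqrt (x ^ 2 + y ^ 2) → |ψ x y| ≤ δ) :
    (∀ x y : ℝ, 0 ≤ y →
      |ψ x y| ≤ (C / π) * (y + 1) / (x ^ 2 + (y + 1) ^ 2)) ∧
    ∃ C' : ℝ, 0 < C' ∧ ∀ x y : ℝ, 1 ≤ y → |ψ x y| ≤ C' / y := by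
  have hCπ : 0 < C / π := div_pos hC pi_pos
  have hdomain : ∀ p : ℝ × ℝ, 0 ≤ p.2 → -1 < p.2 := fun p hp => by linarith
  have hbdry : ∀ x, |ψ x 0| ≤ C / π * shiftedPoisson (x, 0) := fun x => by
    obtain ⟨hlow, hup⟩ := hbound x
    rw [deriv_Phi_zero] at hlow hup
    rw [abs_le, show C / π * shiftedPoisson (x, 0) = C * (shiftedPoisson (x, 0) / π) by ring]
    constructor <;> linarith
  have hmain : ∀ x y, 0 ≤ y → |ψ x y| ≤ C / π * shiftedPoisson (x, y) := fun x y hy =>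
    abs_le_of_coordLaplacian_eq_zero_of_halfPlane (g := (C / π) • shiftedPoisson) (p := (x, y))
      hreg
      ((contDiffOn_shiftedPoisson.mono fun p hp => hdomain p (le_of_lt hp)).const_smul (C / π))
      hcont.continuousOn
      ((contDiffOn_shiftedPoisson.continuousOn.mono fun p hp => hdomain p hp).const_smul (C / π))
      (fun p hp => hharm p.1 p.2 hp)
      (fun p hp => by rw [coordLaplacian_const_smul,
        coordLaplacian_shiftedPoisson (hdomain p hp.le), mul_zero])
      (fun p hp => mul_nonneg hCπ.le (shiftedPoisson_nonneg (hdomain p hp).le))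
      hbdry
      (fun δ hδ => (hinf δ hδ).imp fun R hR p hp hRp =>
        hR p.1 p.2 hp (hRp.trans p.norm_le_sqrt_sq_add_sq)) hy
  refine ⟨fun x y hy => (hmain x y hy).trans_eq (mul_div_assoc _ _ _).symm, C / π, hCπ,
    fun x y hy => ?_⟩
  calc |ψ x y| ≤ C / π * shiftedPoisson (x, y) := hmain x y (by linarith)
    _ ≤ C / π * (1 / y) := by gcongr; exact shiftedPoisson_le_inv (show 0 < y by linarith)
    _ = C / π / y := mul_one_div _ _

/-- Comparison principle: a bounded harmonic function in the half-plane, vanishing at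
infinity, whose boundary values are dominated by `C·∂_x Φ(·,0)`, is dominated by
`C·∂_x Φ = (C/π)(y+1)/(x²+(y+1)²)` everywhere; in particular it is `≤ C'/y` for `y ≥ 1`. -/
theorem stmt_15 (ψ : ℝ → ℝ → ℝ) (C : ℝ) (hC : 0 < C)
    (hreg : ContDiffOn ℝ 2 (fun p : ℝ × ℝ => ψ p.1 p.2) {p : ℝ × ℝ | 0 < p.2})
    (hharm : ∀ x y : ℝ, 0 < y →
      deriv (fun x' => deriv (fun x'' => ψ x'' y) x') x
        + deriv (fun y' => deriv (fun y'' => ψ x y'') y') y = 0)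
    (hcont : Continuous (fun p : ℝ × ℝ => ψ p.1 p.2))
    (hbdd : ∃ M : ℝ, ∀ x y : ℝ, 0 ≤ y → |ψ x y| ≤ M)
    (hbound : ∀ x : ℝ,
      -C * deriv (fun x' => Phi x' 0) x ≤ ψ x 0 ∧
      ψ x 0 ≤ C * deriv (fun x' => Phi x' 0) x)
    (hinf : ∀ δ : ℝ, 0 < δ → ∃ Rr : ℝ, ∀ x y : ℝ, 0 ≤ y →
      Rr ≤ Real.sqrt (x ^ 2 + y ^ 2) → |ψ x y| ≤ δ) :
    (∀ x y : ℝ, 0 ≤ y →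
      |ψ x y| ≤ (C / π) * (y + 1) / (x ^ 2 + (y + 1) ^ 2)) ∧
    ∃ C' : ℝ, 0 < C' ∧ ∀ x y : ℝ, 1 ≤ y → |ψ x y| ≤ C' / y :=
  stmt_15_general ψ C hC hreg hharm hcont hbound hinf
end
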